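/- For every i in {0,...,m-1}, the relation <_{A_i} is a strict partial order on A_i (irreflexive and transitive); moreover, two vertices u,u' in A_i are incomparable in <_{A_i} if and only if N(u) = N(u'). -/
import Mathlib


open SimpleGraph

/-- `c` is a hole (induced cycle on at least 5 vertices) in `G`:
the images of consecutive indices are adjacent, and these are the only adjacencies. -/
def IsHoleEmb {V : Type*} (G : SimpleGraph V) (n : ℕ) (c : ZMod n → V) : Prop :=
  5 ≤ n ∧ Function.Injective c ∧
    ∀ i j : ZMod n, G.Adj (c i) (c j) ↔ (j = i + 1 ∨ i = j + 1)

/-- The triangle `K₃`. -/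
def graphK3 : SimpleGraph (Fin 3) := ⊤

/-- `T₂`: the star `K_{1,3}` with every edge subdivided once. -/
def graphT2 : SimpleGraph (Fin 7) :=
  SimpleGraph.fromRel (fun i j =>
    (i, j) ∈ [((0 : Fin 7), (1 : Fin 7)), (0, 2), (0, 3), (1, 4), (2, 5), (3, 6)])

/-- `X₂`: a 4-cycle `0 1 2 3` with pendant vertices `4, 5, 6` attached at `0, 1, 2`. -/
def graphX2 : SimpleGraph (Fin 7) :=
  SimpleGraph.fromRel (fun i j =>
    (i, j) ∈ [((0 : Fin 7), (1 : Fin 7)), (1, 2), (2, 3), (3, 0), (0, 4), (1, 5), (2, 6)])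

/-- `X₃`: a path `0 1 2 3 4`, a vertex `5` adjacent to `0, 2, 4`, and a pendant `6` at `5`. -/
def graphX3 : SimpleGraph (Fin 7) :=
  SimpleGraph.fromRel (fun i j =>
    (i, j) ∈ [((0 : Fin 7), (1 : Fin 7)), (1, 2), (2, 3), (3, 4), (5, 0), (5, 2), (5, 4), (5, 6)])

/-- The cycle `C_n` on `ZMod n`. -/
def cycleG (n : ℕ) : SimpleGraph (ZMod n) :=
  SimpleGraph.fromRel (fun i j => j = i + 1)

/-- `G` contains an induced copy of `H`. -/
def ContainsInduced {W V : Type*} (H : SimpleGraph W) (G : SimpleGraph V) : Prop :=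
  Nonempty (H ↪g G)

/-- An almost bipartite permutation graph: no induced `K₃`, `T₂`, `X₂`, `X₃`,
nor `C_k` for `k ∈ {5,…,9}`. -/
def AlmostBPG {V : Type*} (G : SimpleGraph V) : Prop :=
  ¬ ContainsInduced graphK3 G ∧ ¬ ContainsInduced graphT2 G ∧
    ¬ ContainsInduced graphX2 G ∧ ¬ ContainsInduced graphX3 G ∧
    ∀ k : ℕ, 5 ≤ k → k ≤ 9 → ¬ ContainsInduced (cycleG k) G

/-- `c` is a shortest hole in `G`. -/
def ShortestHole {V : Type*} (G : SimpleGraph V) (m : ℕ) (c : ZMod m → V) : Prop :=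
  IsHoleEmb G m c ∧ ∀ (n : ℕ) (c' : ZMod n → V), IsHoleEmb G n c' → m ≤ n

/-- `A_i = {v : N(v) ∩ C = {c_{i-1}, c_{i+1}}}`. -/
def Ai {V : Type*} (G : SimpleGraph V) (m : ℕ) (c : ZMod m → V) (i : ZMod m) : Set V :=
  {v | G.neighborSet v ∩ Set.range c = {c (i - 1), c (i + 1)}}

/-- `B_i = {v : N(v) ∩ C = {c_i}}`. -/
def Bi {V : Type*} (G : SimpleGraph V) (m : ℕ) (c : ZMod m → V) (i : ZMod m) : Set V :=
  {v | G.neighborSet v ∩ Set.range c = {c i}}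

/-- `A[i,j] = A_i ∪ B_{i+1} ∪ A_{i+2} ∪ …` for integers `i ≤ j`. -/
def Ablk {V : Type*} (G : SimpleGraph V) (m : ℕ) (c : ZMod m → V) (i j : ℤ) : Set V :=
  {v | ∃ k : ℤ, i ≤ k ∧ k ≤ j ∧
    ((Even (k - i) ∧ v ∈ Ai G m c (k : ZMod m)) ∨ (Odd (k - i) ∧ v ∈ Bi G m c (k : ZMod m)))}

/-- `B[i,j] = B_i ∪ A_{i+1} ∪ B_{i+2} ∪ …` for integers `i ≤ j`. -/
def Bblk {V : Type*} (G : SimpleGraph V) (m : ℕ) (c : ZMod m → V) (i j : ℤ) : Set V :=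
  {v | ∃ k : ℤ, i ≤ k ∧ k ≤ j ∧
    ((Even (k - i) ∧ v ∈ Bi G m c (k : ZMod m)) ∨ (Odd (k - i) ∧ v ∈ Ai G m c (k : ZMod m)))}

/-- `V[i,j] = A[i,j] ∪ B[i,j]`. -/
def Vblk {V : Type*} (G : SimpleGraph V) (m : ℕ) (c : ZMod m → V) (i j : ℤ) : Set V :=
  Ablk G m c i j ∪ Bblk G m c i j

/-- The relation `<_{A_i}`. -/
def ltA {V : Type*} (G : SimpleGraph V) (m : ℕ) (c : ZMod m → V) (i : ZMod m)
    (u u' : V) : Prop :=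
  (∃ w ∈ Bi G m c (i - 2) ∪ Ai G m c (i - 1), G.Adj w u ∧ ¬ G.Adj w u') ∨
  (∃ w ∈ Ai G m c (i + 1) ∪ Bi G m c (i + 2), G.Adj w u' ∧ ¬ G.Adj w u)

/-- The relation `<_{B_i}`. -/
def ltB {V : Type*} (G : SimpleGraph V) (m : ℕ) (c : ZMod m → V) (i : ZMod m)
    (w w' : V) : Prop :=
  (∃ u ∈ Ai G m c (i - 2) ∪ Bi G m c (i - 1), G.Adj u w ∧ ¬ G.Adj u w') ∨
  (∃ u ∈ Bi G m c (i + 1) ∪ Ai G m c (i + 2), G.Adj u w' ∧ ¬ G.Adj u w)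

/-- `r` is a strict linear order on the set `S`. -/
def IsStrictLinearOrderOn {V : Type*} (S : Set V) (r : V → V → Prop) : Prop :=
  (∀ a ∈ S, ¬ r a a) ∧
    (∀ a ∈ S, ∀ b ∈ S, ∀ d ∈ S, r a b → r b d → r a d) ∧
    (∀ a ∈ S, ∀ b ∈ S, a ≠ b → r a b ∨ r b a)

/-- `L` extends `r` on the set `S`. -/
def ExtendsOn {V : Type*} (S : Set V) (r L : V → V → Prop) : Prop :=
  ∀ a ∈ S, ∀ b ∈ S, r a b → L a b

/-- `v` is the maximum of `(S, L)`. -/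
def IsMaxOf {V : Type*} (S : Set V) (L : V → V → Prop) (v : V) : Prop :=
  v ∈ S ∧ ∀ z ∈ S, z ≠ v → L z v

/-- `v` is the minimum of `(S, L)`. -/
def IsMinOf {V : Type*} (S : Set V) (L : V → V → Prop) (v : V) : Prop :=
  v ∈ S ∧ ∀ z ∈ S, z ≠ v → L v z

/-- `v, v'` belong to `S`, `L v v'`, and they are consecutive in `(S, L)`. -/
def ConsecIn {V : Type*} (S : Set V) (L : V → V → Prop) (v v' : V) : Prop :=
  v ∈ S ∧ v' ∈ S ∧ L v v' ∧ ¬ ∃ z ∈ S, L v z ∧ L z v'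

/-- The relation `≺` built from the chosen linear orders `LA i` on `A_i` and `LB i` on `B_i`. -/
def precRel {V : Type*} (G : SimpleGraph V) (m : ℕ) (c : ZMod m → V)
    (LA LB : ZMod m → V → V → Prop) (v v' : V) : Prop :=
  ∃ i : ZMod m,
    ConsecIn (Ai G m c i) (LA i) v v' ∨
    ConsecIn (Bi G m c i) (LB i) v v' ∨
    (IsMaxOf (Ai G m c i) (LA i) v ∧ IsMinOf (Bi G m c (i + 1)) (LB (i + 1)) v') ∨
    (IsMaxOf (Bi G m c i) (LB i) v ∧ IsMinOf (Ai G m c (i + 1)) (LA (i + 1)) v')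

/-- `<_{V'}`: the transitive closure of `≺` restricted to `V'`. -/
def ltOn {V : Type*} (G : SimpleGraph V) (m : ℕ) (c : ZMod m → V)
    (LA LB : ZMod m → V → V → Prop) (V' : Set V) : V → V → Prop :=
  Relation.TransGen (fun a b => a ∈ V' ∧ b ∈ V' ∧ precRel G m c LA LB a b)

/-- The relation `<_cl`. -/
def ltCl {V : Type*} (G : SimpleGraph V) (m : ℕ) (c : ZMod m → V)
    (LA LB : ZMod m → V → V → Prop) (v v' : V) : Prop :=
  ∃ i : ℕ, i < m ∧
    ((v ∈ Ablk G m c ((i : ℤ) - 2) ((i : ℤ) + 2) ∧ v' ∈ Ablk G m c ((i : ℤ) - 2) ((i : ℤ) + 2) ∧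
        ltOn G m c LA LB (Ablk G m c ((i : ℤ) - 2) ((i : ℤ) + 2)) v v') ∨
      (v ∈ Bblk G m c ((i : ℤ) - 2) ((i : ℤ) + 2) ∧ v' ∈ Bblk G m c ((i : ℤ) - 2) ((i : ℤ) + 2) ∧
        ltOn G m c LA LB (Bblk G m c ((i : ℤ) - 2) ((i : ℤ) + 2)) v v'))

/-- `r` is a transitive orientation of `G`. -/
def IsTransOrient {V : Type*} (G : SimpleGraph V) (r : V → V → Prop) : Prop :=
  (∀ v, ¬ r v v) ∧ (∀ a b d, r a b → r b d → r a d) ∧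
    ∀ u v, u ≠ v → ((r u v ∨ r v u) ↔ G.Adj u v)

/-- A permutation graph: both `G` and its complement admit transitive orientations. -/
def IsPermGraph {V : Type*} (G : SimpleGraph V) : Prop :=
  (∃ r, IsTransOrient G r) ∧ ∃ r, IsTransOrient Gᶜ r

/-- A bipartite permutation graph. -/
def IsBPG {V : Type*} (G : SimpleGraph V) : Prop :=
  G.Colorable 2 ∧ IsPermGraph G

/-- `X` is a hole cut of `G`: `G - X` is a bipartite permutation graph. -/
def IsHoleCut {V : Type*} (G : SimpleGraph V) (X : Set V) : Prop :=
  IsBPG (G.induce Xᶜ)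

/-- The adjacency property: for every `u ∈ U`, `N(u)` consists of vertices
consecutive in `(W, r)`. -/
def AdjProperty {V : Type*} (G : SimpleGraph V) (U W : Set V) (r : V → V → Prop) : Prop :=
  ∀ u ∈ U, ∀ w ∈ W, ∀ w' ∈ W, ∀ w'' ∈ W,
    r w w' → r w' w'' → G.Adj u w → G.Adj u w'' → G.Adj u w'

/-- The enclosure property: for `u, u' ∈ U` with `N(u) ⊆ N(u')`, the set `N(u') \ N(u)`
consists of vertices consecutive in `(W, r)`. -/
def EncProperty {V : Type*} (G : SimpleGraph V) (U W : Set V) (r : V → V → Prop) : Prop :=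
  ∀ u ∈ U, ∀ u' ∈ U, G.neighborSet u ∩ W ⊆ G.neighborSet u' ∩ W →
    ∀ w ∈ W, ∀ w' ∈ W, ∀ w'' ∈ W, r w w' → r w' w'' →
      (G.Adj u' w ∧ ¬ G.Adj u w) → (G.Adj u' w'' ∧ ¬ G.Adj u w'') →
        (G.Adj u' w' ∧ ¬ G.Adj u w')

/-- `(U, rU)` and `(W, rW)` form a strong ordering of `U ∪ W`. -/
def StrongOrdering {V : Type*} (G : SimpleGraph V) (U W : Set V)
    (rU rW : V → V → Prop) : Prop :=
  ∀ u ∈ U, ∀ u' ∈ U, ∀ w ∈ W, ∀ w' ∈ W,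
    G.Adj u w' → G.Adj u' w → rU u u' → rW w w' → G.Adj u w ∧ G.Adj u' w'

/-- `S` induces in `G` one of the graphs `K₃, T₂, X₂, X₃, C₅, …, C₉`. -/
def IsForbiddenSet {V : Type*} (G : SimpleGraph V) (S : Set V) : Prop :=
  Nonempty (graphK3 ≃g G.induce S) ∨ Nonempty (graphT2 ≃g G.induce S) ∨
    Nonempty (graphX2 ≃g G.induce S) ∨ Nonempty (graphX3 ≃g G.induce S) ∨
    ∃ k : ℕ, 5 ≤ k ∧ k ≤ 9 ∧ Nonempty (cycleG k ≃g G.induce S)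


section Aux

variable {V : Type*} {G : SimpleGraph V} {m : ℕ} {c : ZMod m → V}

lemma czne (hm : 10 ≤ m) (d : ℤ) (h0 : d ≠ 0) (hlt : d.natAbs < 10) :
    ((d : ℤ) : ZMod m) ≠ 0 := by
  haveI : NeZero m := ⟨by omega⟩
  intro h
  rw [ZMod.intCast_zmod_eq_zero_iff_dvd] at h
  have h2 : m ∣ d.natAbs := by simpa using Int.natAbs_dvd_natAbs.mpr h
  have := Nat.le_of_dvd (by omega) h2
  omega

lemma zne (hm : 10 ≤ m) {p q : ZMod m} (d : ℤ) (hd : p - q = ((d : ℤ) : ZMod m))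
    (h0 : d ≠ 0) (hlt : d.natAbs < 10) : p ≠ q := by
  intro h
  apply czne hm d h0 hlt
  rw [← hd, h, sub_self]

lemma cast_inj_nat (hm : 10 ≤ m) {s t : ℕ} (hs : s < m) (ht : t < m) :
    ((s : ZMod m) = (t : ZMod m)) ↔ s = t := by
  haveI : NeZero m := ⟨by omega⟩
  constructor
  · intro h
    have h1 := ZMod.val_cast_of_lt hs
    have h2 := ZMod.val_cast_of_lt ht
    rw [← h1, ← h2, h]
  · rintro rfl; rfl

/-- Generic way to obtain a contradiction from an induced copy of a forbidden graph. -/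
lemma embedOf {n : ℕ} (H : SimpleGraph (Fin n)) (hH : ¬ ContainsInduced H G)
    (f : Fin n → V)
    (h1 : ∀ a b : Fin n, a < b → H.Adj a b → G.Adj (f a) (f b))
    (h2 : ∀ a b : Fin n, a < b → ¬ H.Adj a b → f a ≠ f b ∧ ¬ G.Adj (f a) (f b)) : False := by
  have h1' : ∀ a b : Fin n, a ≠ b → H.Adj a b → G.Adj (f a) (f b) := by
    intro a b hab h
    rcases lt_or_gt_of_ne hab with hl | hl
    · exact h1 a b hl h
    · exact (h1 b a hl h.symm).symm
  have h2' : ∀ a b : Fin n, a ≠ b → ¬ H.Adj a b → f a ≠ f b ∧ ¬ G.Adj (f a) (f b) := by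
    intro a b hab h
    rcases lt_or_gt_of_ne hab with hl | hl
    · exact h2 a b hl h
    · obtain ⟨x, y⟩ := h2 b a hl (fun hh => h hh.symm)
      exact ⟨x.symm, fun hh => y hh.symm⟩
  apply hH
  refine ⟨⟨⟨f, ?_⟩, ?_⟩⟩
  · intro a b hfe
    by_contra hne
    by_cases hA : H.Adj a b
    · exact (h1' a b hne hA).ne hfe
    · exact (h2' a b hne hA).1 hfe
  · intro a b
    constructor
    · intro hGadj
      by_contra hA
      rcases eq_or_ne a b with rfl | hne
      · exact G.irrefl hGadj
      · exact (h2' a b hne hA).2 hGadj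
    · intro hA
      exact h1' a b hA.ne hA

end Aux
section Aux2
variable {V : Type*} {G : SimpleGraph V}

instance : DecidableRel graphK3.Adj := fun a b =>
  decidable_of_iff (a ≠ b) (by simp [graphK3])

instance : DecidableRel graphT2.Adj := fun a b =>
  decidable_of_iff _ (SimpleGraph.fromRel_adj _ a b).symm

instance : DecidableRel graphX2.Adj := fun a b =>
  decidable_of_iff _ (SimpleGraph.fromRel_adj _ a b).symm

instance : DecidableRel graphX3.Adj := fun a b =>
  decidable_of_iff _ (SimpleGraph.fromRel_adj _ a b).symm

lemma noK3 (hK : ¬ ContainsInduced graphK3 G) {a b c : V}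
    (h1 : G.Adj a b) (h2 : G.Adj a c) (h3 : G.Adj b c) : False := by
  apply embedOf graphK3 hK ![a, b, c]
  · intro x y hlt hadj
    fin_cases x <;> fin_cases y <;>
      first
        | exact absurd hlt (by decide)
        | exact absurd hadj (by decide)
        | assumption
        | (apply SimpleGraph.Adj.symm; assumption)
  · intro x y hlt hadj
    fin_cases x <;> fin_cases y <;>
      first
        | exact absurd hlt (by decide)
        | exact absurd (by decide) hadj
        | exact ⟨by assumption, by assumption⟩
lemma T2_of (hX : ¬ ContainsInduced graphT2 G) (v0 v1 v2 v3 v4 v5 v6 : V)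
    (e01 : G.Adj v0 v1)
    (e02 : G.Adj v0 v2)
    (e03 : G.Adj v0 v3)
    (e14 : G.Adj v1 v4)
    (e25 : G.Adj v2 v5)
    (e36 : G.Adj v3 v6)
    (d04 : v0 ≠ v4) (n04 : ¬ G.Adj v0 v4)
    (d05 : v0 ≠ v5) (n05 : ¬ G.Adj v0 v5)
    (d06 : v0 ≠ v6) (n06 : ¬ G.Adj v0 v6)
    (d12 : v1 ≠ v2) (n12 : ¬ G.Adj v1 v2)
    (d13 : v1 ≠ v3) (n13 : ¬ G.Adj v1 v3)
    (d15 : v1 ≠ v5) (n15 : ¬ G.Adj v1 v5)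
    (d16 : v1 ≠ v6) (n16 : ¬ G.Adj v1 v6)
    (d23 : v2 ≠ v3) (n23 : ¬ G.Adj v2 v3)
    (d24 : v2 ≠ v4) (n24 : ¬ G.Adj v2 v4)
    (d26 : v2 ≠ v6) (n26 : ¬ G.Adj v2 v6)
    (d34 : v3 ≠ v4) (n34 : ¬ G.Adj v3 v4)
    (d35 : v3 ≠ v5) (n35 : ¬ G.Adj v3 v5)
    (d45 : v4 ≠ v5) (n45 : ¬ G.Adj v4 v5)
    (d46 : v4 ≠ v6) (n46 : ¬ G.Adj v4 v6)
    (d56 : v5 ≠ v6) (n56 : ¬ G.Adj v5 v6)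
    : False := by
  apply embedOf graphT2 hX ![v0, v1, v2, v3, v4, v5, v6]
  · intro x y hlt hadj
    fin_cases x <;> fin_cases y <;>
      first
        | exact absurd hlt (by decide)
        | exact absurd hadj (by decide)
        | assumption
        | (apply SimpleGraph.Adj.symm; assumption)
  · intro x y hlt hadj
    fin_cases x <;> fin_cases y <;>
      first
        | exact absurd hlt (by decide)
        | exact absurd (by decide) hadj
        | exact ⟨by assumption, by assumption⟩

lemma X2_of (hX : ¬ ContainsInduced graphX2 G) (v0 v1 v2 v3 v4 v5 v6 : V)
    (e01 : G.Adj v0 v1)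
    (e12 : G.Adj v1 v2)
    (e23 : G.Adj v2 v3)
    (e03 : G.Adj v0 v3)
    (e04 : G.Adj v0 v4)
    (e15 : G.Adj v1 v5)
    (e26 : G.Adj v2 v6)
    (d02 : v0 ≠ v2) (n02 : ¬ G.Adj v0 v2)
    (d05 : v0 ≠ v5) (n05 : ¬ G.Adj v0 v5)
    (d06 : v0 ≠ v6) (n06 : ¬ G.Adj v0 v6)
    (d13 : v1 ≠ v3) (n13 : ¬ G.Adj v1 v3)
    (d14 : v1 ≠ v4) (n14 : ¬ G.Adj v1 v4)
    (d16 : v1 ≠ v6) (n16 : ¬ G.Adj v1 v6)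
    (d24 : v2 ≠ v4) (n24 : ¬ G.Adj v2 v4)
    (d25 : v2 ≠ v5) (n25 : ¬ G.Adj v2 v5)
    (d34 : v3 ≠ v4) (n34 : ¬ G.Adj v3 v4)
    (d35 : v3 ≠ v5) (n35 : ¬ G.Adj v3 v5)
    (d36 : v3 ≠ v6) (n36 : ¬ G.Adj v3 v6)
    (d45 : v4 ≠ v5) (n45 : ¬ G.Adj v4 v5)
    (d46 : v4 ≠ v6) (n46 : ¬ G.Adj v4 v6)
    (d56 : v5 ≠ v6) (n56 : ¬ G.Adj v5 v6)
    : False := by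
  apply embedOf graphX2 hX ![v0, v1, v2, v3, v4, v5, v6]
  · intro x y hlt hadj
    fin_cases x <;> fin_cases y <;>
      first
        | exact absurd hlt (by decide)
        | exact absurd hadj (by decide)
        | assumption
        | (apply SimpleGraph.Adj.symm; assumption)
  · intro x y hlt hadj
    fin_cases x <;> fin_cases y <;>
      first
        | exact absurd hlt (by decide)
        | exact absurd (by decide) hadj
        | exact ⟨by assumption, by assumption⟩

lemma X3_of (hX : ¬ ContainsInduced graphX3 G) (v0 v1 v2 v3 v4 v5 v6 : V)
    (e01 : G.Adj v0 v1)
    (e12 : G.Adj v1 v2)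
    (e23 : G.Adj v2 v3)
    (e34 : G.Adj v3 v4)
    (e05 : G.Adj v0 v5)
    (e25 : G.Adj v2 v5)
    (e45 : G.Adj v4 v5)
    (e56 : G.Adj v5 v6)
    (d02 : v0 ≠ v2) (n02 : ¬ G.Adj v0 v2)
    (d03 : v0 ≠ v3) (n03 : ¬ G.Adj v0 v3)
    (d04 : v0 ≠ v4) (n04 : ¬ G.Adj v0 v4)
    (d06 : v0 ≠ v6) (n06 : ¬ G.Adj v0 v6)
    (d13 : v1 ≠ v3) (n13 : ¬ G.Adj v1 v3)
    (d14 : v1 ≠ v4) (n14 : ¬ G.Adj v1 v4)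
    (d15 : v1 ≠ v5) (n15 : ¬ G.Adj v1 v5)
    (d16 : v1 ≠ v6) (n16 : ¬ G.Adj v1 v6)
    (d24 : v2 ≠ v4) (n24 : ¬ G.Adj v2 v4)
    (d26 : v2 ≠ v6) (n26 : ¬ G.Adj v2 v6)
    (d35 : v3 ≠ v5) (n35 : ¬ G.Adj v3 v5)
    (d36 : v3 ≠ v6) (n36 : ¬ G.Adj v3 v6)
    (d46 : v4 ≠ v6) (n46 : ¬ G.Adj v4 v6)
    : False := by
  apply embedOf graphX3 hX ![v0, v1, v2, v3, v4, v5, v6]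
  · intro x y hlt hadj
    fin_cases x <;> fin_cases y <;>
      first
        | exact absurd hlt (by decide)
        | exact absurd hadj (by decide)
        | assumption
        | (apply SimpleGraph.Adj.symm; assumption)
  · intro x y hlt hadj
    fin_cases x <;> fin_cases y <;>
      first
        | exact absurd hlt (by decide)
        | exact absurd (by decide) hadj
        | exact ⟨by assumption, by assumption⟩

end Aux2
section Aux4
variable {V : Type*} {G : SimpleGraph V}

/-- Build a hole from a cyclically arranged list of vertices. -/
lemma mkHole {n : ℕ} (hn : 5 ≤ n) (f : ℕ → V)
    (hinj : ∀ a b : ℕ, a < b → b < n → f a ≠ f b)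
    (he : ∀ a : ℕ, a + 1 < n → G.Adj (f a) (f (a + 1)))
    (he' : G.Adj (f (n - 1)) (f 0))
    (hne : ∀ a b : ℕ, a < b → b < n → b ≠ a + 1 → ¬ (a = 0 ∧ b = n - 1) →
      ¬ G.Adj (f a) (f b)) :
    IsHoleEmb G n (fun k : ZMod n => f k.val) := by
  haveI : NeZero n := ⟨by omega⟩
  haveI : Fact (1 < n) := ⟨by omega⟩
  have valinj : ∀ x y : ZMod n, x.val = y.val → x = y := by
    intro x y h
    have := ZMod.natCast_rightInverse (n := n)
    rw [← this x, ← this y, h]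
  refine ⟨hn, ?_, ?_⟩
  · intro i j hf
    have hi : i.val < n := ZMod.val_lt i
    have hj : j.val < n := ZMod.val_lt j
    apply valinj
    rcases lt_trichotomy i.val j.val with h | h | h
    · exact absurd hf (hinj _ _ h hj)
    · exact h
    · exact absurd hf.symm (hinj _ _ h hi)
  · intro i j
    have hi : i.val < n := ZMod.val_lt i
    have hj : j.val < n := ZMod.val_lt j
    have key : ∀ x y : ZMod n, (y = x + 1) ↔ y.val = (x.val + 1) % n := by
      intro x y
      constructor
      · rintro rfl
        rw [ZMod.val_add, ZMod.val_one]
      · intro h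
        apply valinj
        rw [h, ZMod.val_add, ZMod.val_one]
    rw [key, key]
    show G.Adj (f i.val) (f j.val) ↔ _
    generalize i.val = a at hi ⊢
    generalize j.val = b at hj ⊢
    have e1 : (a + 1) % n = if a + 1 = n then 0 else a + 1 := by
      split
      · next h => rw [h, Nat.mod_self]
      · exact Nat.mod_eq_of_lt (by omega)
    have e2 : (b + 1) % n = if b + 1 = n then 0 else b + 1 := by
      split
      · next h => rw [h, Nat.mod_self]
      · exact Nat.mod_eq_of_lt (by omega)
    have hr : (b = (a + 1) % n ∨ a = (b + 1) % n) ↔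
        (b = a + 1 ∨ a = b + 1 ∨ (a = n - 1 ∧ b = 0) ∨ (b = n - 1 ∧ a = 0)) := by
      rw [e1, e2]; split_ifs <;> omega
    rw [hr]
    constructor
    · intro hadj
      by_contra hcon
      push_neg at hcon
      obtain ⟨h1', h2', h3', h4'⟩ := hcon
      rcases lt_trichotomy a b with h | h | h
      · exact hne a b h hj (by omega) (by omega) hadj
      · exact G.irrefl (by rwa [h] at hadj)
      · exact hne b a h hi (by omega) (by omega) hadj.symm
    · rintro (rfl | rfl | ⟨h1, h2⟩ | ⟨h1, h2⟩)
      · exact he a (by omega)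
      · exact (he b (by omega)).symm
      · rw [h1, h2]; exact he'
      · rw [h1, h2]; exact he'.symm

end Aux4
section Aux5
variable {V : Type*} {G : SimpleGraph V} {m : ℕ} {c : ZMod m → V}

/-- Shortcut contradiction: a vertex `z` (with C-neighbourhood contained in
`{c p, c (p-2)}`) adjacent to `w`, where `w` is adjacent to `c (p+a)` but to no
`c (p+t)` for `t < a`, yields a hole of length `a+3 < m`. -/
lemma SC2 (hm : 10 ≤ m)
    (hshort : ∀ (n : ℕ) (c' : ZMod n → V), IsHoleEmb G n c' → m ≤ n)
    (hc : ∀ i j : ZMod m, G.Adj (c i) (c j) ↔ (j = i + 1 ∨ i = j + 1))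
    (hcinj : Function.Injective c)
    (z w : V) (p : ZMod m) (a : ℕ) (ha2 : 2 ≤ a) (ha4 : a ≤ m - 4)
    (hz : ∀ q, G.Adj z (c q) → q = p ∨ q = p - 2)
    (hzp : G.Adj z (c p))
    (hzw : G.Adj z w)
    (hwa : G.Adj w (c (p + (a : ℕ))))
    (hwmin : ∀ t : ℕ, t < a → ¬ G.Adj w (c (p + (t : ℕ))))
    (hwC : w ∉ Set.range c) : False := by
  have castinj : ∀ s t : ℕ, s < m → t < m → ((s : ZMod m) = t) → s = t :=
    fun s t hs ht h => (cast_inj_nat hm hs ht).mp h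
  have keyadj : ∀ s t : ℕ, s ≤ m - 3 → t ≤ m - 3 →
      (G.Adj (c (p + (s : ℕ))) (c (p + (t : ℕ))) ↔ (t = s + 1 ∨ s = t + 1)) := by
    intro s t hs ht
    rw [hc]
    constructor
    · rintro (h | h)
      · left
        have : ((t : ℕ) : ZMod m) = ((s + 1 : ℕ) : ZMod m) := by
          push_cast
          linear_combination h
        exact castinj _ _ (by omega) (by omega) this
      · right
        have : ((s : ℕ) : ZMod m) = ((t + 1 : ℕ) : ZMod m) := by
          push_cast
          linear_combination h
        exact castinj _ _ (by omega) (by omega) this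
    · rintro (rfl | rfl)
      · left; push_cast; ring
      · right; push_cast; ring
  set f : ℕ → V := fun k =>
    if k = 0 then z else if k ≤ a + 1 then c (p + ((k - 1 : ℕ) : ZMod m)) else w with hf
  have hf0 : f 0 = z := by simp [hf]
  have hfc : ∀ k, 1 ≤ k → k ≤ a + 1 → f k = c (p + ((k - 1 : ℕ) : ZMod m)) := by
    intro k h1 h2
    simp only [hf]
    rw [if_neg (by omega), if_pos (by omega)]
  have hfw : ∀ k, a + 1 < k → f k = w := by
    intro k h1
    simp only [hf]
    rw [if_neg (by omega), if_neg (by omega)]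
  have hbig4 : ∀ q : ZMod m, p + ((2:ℕ) : ZMod m) = q → (q = p ∨ q = p - 2) → False := by
    rintro q rfl (h | h)
    · have : ((2 : ℕ) : ZMod m) = ((0 : ℕ) : ZMod m) := by push_cast; linear_combination h
      have := castinj _ _ (by omega) (by omega) this; omega
    · have : ((4 : ℕ) : ZMod m) = ((0 : ℕ) : ZMod m) := by push_cast; linear_combination h
      have := castinj _ _ (by omega) (by omega) this; omega
  -- injectivity
  have hinj : ∀ A B : ℕ, A < B → B < a + 3 → f A ≠ f B := by
    intro A B hAB hBn h
    rcases Nat.eq_zero_or_pos A with rfl | hA1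
    · rcases Nat.lt_or_ge B (a + 2) with hB | hB
      · -- z = c (p + (B-1))
        rw [hf0, hfc B (by omega) (by omega)] at h
        have hadj : G.Adj (c (p + ((B - 1 : ℕ) : ZMod m))) (c (p + ((0 : ℕ) : ZMod m))) := by
          rw [← h]
          simpa using hzp
        rcases (keyadj _ _ (by omega) (by omega)).mp hadj with h' | h'
        · omega
        · -- B - 1 = 1, so z = c (p+1); but then z ~ c(p+2), contradicting hz
          have hB2 : B = 2 := by omega
          subst hB2
          have hadj2 : G.Adj z (c (p + ((2 : ℕ) : ZMod m))) := by
            rw [h]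
            exact (keyadj 1 2 (by omega) (by omega)).mpr (Or.inl rfl)
          exact hbig4 _ rfl (hz _ hadj2)
      · have hB2 : B = a + 2 := by omega
        subst hB2
        rw [hf0, hfw (a + 2) (by omega)] at h
        exact G.irrefl (h ▸ hzw)
    · rcases Nat.lt_or_ge B (a + 2) with hB | hB
      · rw [hfc A (by omega) (by omega), hfc B (by omega) (by omega)] at h
        have := hcinj h
        have h2 : ((A - 1 : ℕ) : ZMod m) = ((B - 1 : ℕ) : ZMod m) := by
          have := add_left_cancel this
          exact this
        have := castinj _ _ (by omega) (by omega) h2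
        omega
      · have hB2 : B = a + 2 := by omega
        subst hB2
        rw [hfc A (by omega) (by omega), hfw (a + 2) (by omega)] at h
        exact hwC ⟨_, h⟩
  -- consecutive edges
  have he : ∀ A : ℕ, A + 1 < a + 3 → G.Adj (f A) (f (A + 1)) := by
    intro A hA
    rcases Nat.eq_zero_or_pos A with rfl | hA1
    · rw [hf0, hfc 1 (by omega) (by omega)]
      simpa using hzp
    · rcases Nat.lt_or_ge A (a + 1) with hAa | hAa
      · rw [hfc A (by omega) (by omega), hfc (A + 1) (by omega) (by omega)]
        apply (keyadj _ _ (by omega) (by omega)).mpr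
        left; omega
      · have : A = a + 1 := by omega
        subst this
        rw [hfc (a + 1) (by omega) (by omega), hfw (a + 2) (by omega)]
        have : (a + 1 - 1 : ℕ) = a := by omega
        rw [this]
        exact hwa.symm
  have he' : G.Adj (f (a + 3 - 1)) (f 0) := by
    have : (a + 3 - 1 : ℕ) = a + 2 := by omega
    rw [this, hf0, hfw (a + 2) (by omega)]
    exact hzw.symm
  -- non-edges
  have hne : ∀ A B : ℕ, A < B → B < a + 3 → B ≠ A + 1 → ¬ (A = 0 ∧ B = a + 3 - 1) →
      ¬ G.Adj (f A) (f B) := by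
    intro A B hAB hBn hBA h0 hadj
    rcases Nat.eq_zero_or_pos A with rfl | hA1
    · have hB : B ≤ a + 1 := by omega
      rw [hf0, hfc B (by omega) (by omega)] at hadj
      rcases hz _ hadj with h' | h'
      · have : ((B - 1 : ℕ) : ZMod m) = ((0 : ℕ) : ZMod m) := by
          push_cast
          linear_combination h'
        have := castinj _ _ (by omega) (by omega) this
        omega
      · have : ((B + 1 : ℕ) : ZMod m) = ((0 : ℕ) : ZMod m) := by
          push_cast [Nat.cast_sub (show 1 ≤ B by omega)] at h' ⊢
          linear_combination h'
        have := castinj _ _ (by omega) (by omega) this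
        omega
    · rcases Nat.lt_or_ge B (a + 2) with hB | hB
      · rw [hfc A (by omega) (by omega), hfc B (by omega) (by omega)] at hadj
        rcases (keyadj _ _ (by omega) (by omega)).mp hadj with h' | h' <;> omega
      · have hB2 : B = a + 2 := by omega
        subst hB2
        rw [hfc A (by omega) (by omega), hfw (a + 2) (by omega)] at hadj
        exact hwmin (A - 1) (by omega) hadj.symm
  have hH := mkHole (G := G) (n := a + 3) (by omega) f hinj he he' hne
  have := hshort (a + 3) _ hH
  omega

end Aux5
section Aux6
variable {V : Type*} {G : SimpleGraph V} {m : ℕ} {c : ZMod m → V}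

lemma Ai_facts (hcinj : Function.Injective c) {i : ZMod m} {u : V}
    (hu : u ∈ Ai G m c i) :
    G.Adj u (c (i - 1)) ∧ G.Adj u (c (i + 1)) ∧
      ∀ p, G.Adj u (c p) → p = i - 1 ∨ p = i + 1 := by
  have hu' : G.neighborSet u ∩ Set.range c = {c (i - 1), c (i + 1)} := hu
  refine ⟨?_, ?_, ?_⟩
  · have : c (i - 1) ∈ G.neighborSet u ∩ Set.range c := by
      rw [hu']; exact Set.mem_insert _ _
    exact this.1
  · have : c (i + 1) ∈ G.neighborSet u ∩ Set.range c := by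
      rw [hu']; exact Set.mem_insert_of_mem _ rfl
    exact this.1
  · intro p hp
    have : c p ∈ G.neighborSet u ∩ Set.range c := ⟨hp, ⟨p, rfl⟩⟩
    rw [hu'] at this
    rcases this with h | h
    · exact Or.inl (hcinj h)
    · exact Or.inr (hcinj h)

lemma Bi_facts (hcinj : Function.Injective c) {i : ZMod m} {w : V}
    (hw : w ∈ Bi G m c i) :
    G.Adj w (c i) ∧ ∀ p, G.Adj w (c p) → p = i := by
  have hw' : G.neighborSet w ∩ Set.range c = {c i} := hw
  refine ⟨?_, ?_⟩
  · have : c i ∈ G.neighborSet w ∩ Set.range c := by rw [hw']; rfl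
    exact this.1
  · intro p hp
    have : c p ∈ G.neighborSet w ∩ Set.range c := ⟨hp, ⟨p, rfl⟩⟩
    rw [hw'] at this
    exact hcinj this

lemma mem_Ai_of {i : ZMod m} {u : V}
    (h1 : G.Adj u (c (i - 1))) (h2 : G.Adj u (c (i + 1)))
    (h3 : ∀ p, G.Adj u (c p) → p = i - 1 ∨ p = i + 1) : u ∈ Ai G m c i := by
  show G.neighborSet u ∩ Set.range c = {c (i - 1), c (i + 1)}
  ext x
  simp only [Set.mem_inter_iff, SimpleGraph.mem_neighborSet, Set.mem_range,
    Set.mem_insert_iff, Set.mem_singleton_iff]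
  constructor
  · rintro ⟨hadj, q, rfl⟩
    rcases h3 q hadj with rfl | rfl
    · exact Or.inl rfl
    · exact Or.inr rfl
  · rintro (rfl | rfl)
    · exact ⟨h1, ⟨i - 1, rfl⟩⟩
    · exact ⟨h2, ⟨i + 1, rfl⟩⟩

lemma mem_Bi_of {i : ZMod m} {w : V}
    (h1 : G.Adj w (c i)) (h3 : ∀ p, G.Adj w (c p) → p = i) : w ∈ Bi G m c i := by
  show G.neighborSet w ∩ Set.range c = {c i}
  ext x
  simp only [Set.mem_inter_iff, SimpleGraph.mem_neighborSet, Set.mem_range,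
    Set.mem_singleton_iff]
  constructor
  · rintro ⟨hadj, q, rfl⟩
    rw [h3 q hadj]
  · rintro rfl
    exact ⟨h1, ⟨i, rfl⟩⟩

lemma Ai_ne_c (hm : 10 ≤ m)
    (hc : ∀ i j : ZMod m, G.Adj (c i) (c j) ↔ (j = i + 1 ∨ i = j + 1))
    {i : ZMod m} {u : V}
    (h3 : ∀ p, G.Adj u (c p) → p = i - 1 ∨ p = i + 1)
    {q : ZMod m} (hq : q ≠ i) : u ≠ c q := by
  intro h
  subst h
  have a1 : G.Adj (c q) (c (q + 1)) := (hc _ _).mpr (Or.inl rfl)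
  have a2 : G.Adj (c q) (c (q - 1)) := (hc _ _).mpr (Or.inr (by ring))
  rcases h3 _ a1 with h1 | h1
  · rcases h3 _ a2 with h2 | h2
    · exact czne hm 2 (by norm_num) (by norm_num) (by push_cast; linear_combination h1 - h2)
    · exact czne hm 4 (by norm_num) (by norm_num) (by push_cast; linear_combination h1 - h2)
  · exact hq (by linear_combination h1)

end Aux6
section Aux7
variable {V : Type*} {G : SimpleGraph V} {m : ℕ} {c : ZMod m → V}

lemma cc_adj (hc : ∀ i j : ZMod m, G.Adj (c i) (c j) ↔ (j = i + 1 ∨ i = j + 1))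
    {x y : ZMod m} (h : y = x + 1) : G.Adj (c x) (c y) := (hc _ _).mpr (Or.inl h)

lemma cc_adj' (hc : ∀ i j : ZMod m, G.Adj (c i) (c j) ↔ (j = i + 1 ∨ i = j + 1))
    {x y : ZMod m} (h : x = y + 1) : G.Adj (c x) (c y) := (hc _ _).mpr (Or.inr h)

lemma cc_nadj (hm : 10 ≤ m)
    (hc : ∀ i j : ZMod m, G.Adj (c i) (c j) ↔ (j = i + 1 ∨ i = j + 1))
    (x y : ZMod m) (d : ℤ) (hd : x - y = ((d : ℤ) : ZMod m))
    (h1 : d ≠ 1) (h2 : d ≠ -1) (hlt : d.natAbs < 9) : ¬ G.Adj (c x) (c y) := by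
  intro h
  rcases (hc x y).mp h with h' | h'
  · exact czne hm (d + 1) (by omega) (by omega)
      (by push_cast; linear_combination -hd - h')
  · exact czne hm (d - 1) (by omega) (by omega)
      (by push_cast; linear_combination -hd + h')

lemma cc_ne (hm : 10 ≤ m) (hcinj : Function.Injective c)
    (x y : ZMod m) (d : ℤ) (hd : x - y = ((d : ℤ) : ZMod m))
    (h0 : d ≠ 0) (hlt : d.natAbs < 10) : c x ≠ c y :=
  fun h => zne hm d hd h0 hlt (hcinj h)

lemma Bi_ne_c (hm : 10 ≤ m)
    (hc : ∀ i j : ZMod m, G.Adj (c i) (c j) ↔ (j = i + 1 ∨ i = j + 1))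
    {j : ZMod m} {w : V} (h3 : ∀ p, G.Adj w (c p) → p = j) (q : ZMod m) : w ≠ c q := by
  intro h
  subst h
  have a1 := h3 _ ((hc q (q + 1)).mpr (Or.inl rfl))
  have a2 := h3 _ ((hc q (q - 1)).mpr (Or.inr (by ring)))
  exact czne hm 2 (by norm_num) (by norm_num) (by push_cast; linear_combination a1 - a2)

end Aux7
section Aux7b
variable {V : Type*} {G : SimpleGraph V} {m : ℕ} {c : ZMod m → V}

lemma zne' (hm : 10 ≤ m) (p q : ZMod m) (d : ℤ) (hd : p - q = ((d : ℤ) : ZMod m))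
    (h0 : d ≠ 0) (hlt : d.natAbs < 10) : p ≠ q := zne hm d hd h0 hlt

end Aux7b
section Aux8
variable {V : Type*} {G : SimpleGraph V} {m : ℕ} {c : ZMod m → V}

/-- Core lemma: if `u, u' ∈ A_i` are incomparable, then every neighbour of `u`
is a neighbour of `u'`. -/
lemma NBR (hm : 10 ≤ m)
    (hshort : ∀ (n : ℕ) (c' : ZMod n → V), IsHoleEmb G n c' → m ≤ n)
    (hc : ∀ i j : ZMod m, G.Adj (c i) (c j) ↔ (j = i + 1 ∨ i = j + 1))
    (hcinj : Function.Injective c)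
    (hK3 : ¬ ContainsInduced graphK3 G) (hX2 : ¬ ContainsInduced graphX2 G)
    (i : ZMod m) (u u' w : V)
    (hu : u ∈ Ai G m c i) (hu' : u' ∈ Ai G m c i)
    (hL : ∀ z, z ∈ Bi G m c (i - 2) ∪ Ai G m c (i - 1) → G.Adj z u → G.Adj z u')
    (hR : ∀ z, z ∈ Ai G m c (i + 1) ∪ Bi G m c (i + 2) → G.Adj z u → G.Adj z u')
    (hw : G.Adj u w) : G.Adj u' w := by
  classical
  haveI : NeZero m := ⟨by omega⟩
  by_contra hnw
  obtain ⟨hum, hup, hue⟩ := Ai_facts hcinj hu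
  obtain ⟨hu'm, hu'p, hu'e⟩ := Ai_facts hcinj hu'
  have huu' : ¬ G.Adj u u' := fun h => noK3 hK3 h hum hu'm
  have hneuu' : u ≠ u' := by rintro rfl; exact hnw hw
  have hnadj_u : ∀ q : ZMod m, q ≠ i - 1 → q ≠ i + 1 → ¬ G.Adj u (c q) :=
    fun q h1 h2 h => (hue q h).elim h1 h2
  have hnadj_u' : ∀ q : ZMod m, q ≠ i - 1 → q ≠ i + 1 → ¬ G.Adj u' (c q) :=
    fun q h1 h2 h => (hu'e q h).elim h1 h2
  -- Case: w lies on the hole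
  by_cases hwC : w ∈ Set.range c
  · obtain ⟨q, rfl⟩ := hwC
    rcases hue q hw with rfl | rfl
    · exact hnw hu'm
    · exact hnw hu'p
  -- now w is off the hole
  have hwne : ∀ q : ZMod m, w ≠ c q := fun q h => hwC ⟨q, h.symm⟩
  by_cases hwemp : ∀ q, ¬ G.Adj w (c q)
  · -- X2 on (c(i+1), u, c(i-1), u', c(i+2), w, c(i-2))
    exact X2_of hX2 (c (i+1)) u (c (i-1)) u' (c (i+2)) w (c (i-2))
      (hup.symm) (hum) (hu'm.symm) (hu'p.symm)
      (cc_adj hc (by ring)) (hw) (cc_adj' hc (by ring))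
      (cc_ne hm hcinj _ _ 2 (by push_cast; ring) (by norm_num) (by norm_num))
      (cc_nadj hm hc _ _ 2 (by push_cast; ring) (by norm_num) (by norm_num) (by norm_num))
      (fun h => hwne _ h.symm) (fun h => hwemp _ h.symm)
      (cc_ne hm hcinj _ _ 3 (by push_cast; ring) (by norm_num) (by norm_num))
      (cc_nadj hm hc _ _ 3 (by push_cast; ring) (by norm_num) (by norm_num) (by norm_num))
      (hneuu') (huu')
      (Ai_ne_c hm hc hue (zne' hm _ _ 2 (by push_cast; ring) (by norm_num) (by norm_num)))
      (hnadj_u _ (zne' hm _ _ 3 (by push_cast; ring) (by norm_num) (by norm_num))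
        (zne' hm _ _ 1 (by push_cast; ring) (by norm_num) (by norm_num)))
      (Ai_ne_c hm hc hue (zne' hm _ _ (-2) (by push_cast; ring) (by norm_num) (by norm_num)))
      (hnadj_u _ (zne' hm _ _ (-1) (by push_cast; ring) (by norm_num) (by norm_num))
        (zne' hm _ _ (-3) (by push_cast; ring) (by norm_num) (by norm_num)))
      (cc_ne hm hcinj _ _ (-3) (by push_cast; ring) (by norm_num) (by norm_num))
      (cc_nadj hm hc _ _ (-3) (by push_cast; ring) (by norm_num) (by norm_num) (by norm_num))
      (fun h => hwne _ h.symm) (fun h => hwemp _ h.symm)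
      (Ai_ne_c hm hc hu'e (zne' hm _ _ 2 (by push_cast; ring) (by norm_num) (by norm_num)))
      (hnadj_u' _ (zne' hm _ _ 3 (by push_cast; ring) (by norm_num) (by norm_num))
        (zne' hm _ _ 1 (by push_cast; ring) (by norm_num) (by norm_num)))
      (fun h => huu' (by rw [h]; exact hw)) (hnw)
      (Ai_ne_c hm hc hu'e (zne' hm _ _ (-2) (by push_cast; ring) (by norm_num) (by norm_num)))
      (hnadj_u' _ (zne' hm _ _ (-1) (by push_cast; ring) (by norm_num) (by norm_num))
        (zne' hm _ _ (-3) (by push_cast; ring) (by norm_num) (by norm_num)))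
      (fun h => hwne _ h.symm) (fun h => hwemp _ h.symm)
      (cc_ne hm hcinj _ _ 4 (by push_cast; ring) (by norm_num) (by norm_num))
      (cc_nadj hm hc _ _ 4 (by push_cast; ring) (by norm_num) (by norm_num) (by norm_num))
      (hwne _) (hwemp _)
  push_neg at hwemp
  obtain ⟨q0, hq0⟩ := hwemp
  -- minimal forward gap a
  have hexa : ∃ t : ℕ, G.Adj w (c (i + 1 + (t : ℕ))) := by
    refine ⟨(q0 - (i + 1)).val, ?_⟩
    have hv : (((q0 - (i + 1)).val : ℕ) : ZMod m) = q0 - (i + 1) :=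
      ZMod.natCast_rightInverse _
    rw [hv, show i + 1 + (q0 - (i + 1)) = q0 by ring]
    exact hq0
  have hexb : ∃ t : ℕ, G.Adj w (c (i - 1 - (t : ℕ))) := by
    refine ⟨((i - 1) - q0).val, ?_⟩
    have hv : ((((i - 1) - q0).val : ℕ) : ZMod m) = (i - 1) - q0 :=
      ZMod.natCast_rightInverse _
    rw [hv, show i - 1 - ((i - 1) - q0) = q0 by ring]
    exact hq0
  set a := Nat.find hexa with hadef
  set b := Nat.find hexb with hbdef
  have ha : G.Adj w (c (i + 1 + (a : ℕ))) := Nat.find_spec hexa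
  have hamin : ∀ t : ℕ, t < a → ¬ G.Adj w (c (i + 1 + (t : ℕ))) :=
    fun t ht => Nat.find_min hexa ht
  have hb : G.Adj w (c (i - 1 - (b : ℕ))) := Nat.find_spec hexb
  have hbmin : ∀ t : ℕ, t < b → ¬ G.Adj w (c (i - 1 - (t : ℕ))) :=
    fun t ht => Nat.find_min hexb ht
  have ham : a < m := by
    have h1 : a ≤ (q0 - (i + 1)).val := Nat.find_le (by
      have hv : (((q0 - (i + 1)).val : ℕ) : ZMod m) = q0 - (i + 1) :=
        ZMod.natCast_rightInverse _
      rw [hv, show i + 1 + (q0 - (i + 1)) = q0 by ring]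
      exact hq0)
    have := ZMod.val_lt (q0 - (i + 1))
    omega
  have hbm : b < m := by
    have h1 : b ≤ ((i - 1) - q0).val := Nat.find_le (by
      have hv : ((((i - 1) - q0).val : ℕ) : ZMod m) = (i - 1) - q0 :=
        ZMod.natCast_rightInverse _
      rw [hv, show i - 1 - ((i - 1) - q0) = q0 by ring]
      exact hq0)
    have := ZMod.val_lt ((i - 1) - q0)
    omega
  -- triangles forbid adjacency to c(i±1)
  have tri1 : ¬ G.Adj w (c (i + 1)) := fun h => noK3 hK3 hw hup h
  have tri2 : ¬ G.Adj w (c (i - 1)) := fun h => noK3 hK3 hw hum h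
  -- exhaustive position description
  have exact_fwd : ∀ p, G.Adj w (c p) → ∃ t : ℕ, t < m ∧ p = i + 1 + (t : ℕ) ∧ a ≤ t := by
    intro p hp
    have hv : (((p - (i + 1)).val : ℕ) : ZMod m) = p - (i + 1) :=
      ZMod.natCast_rightInverse _
    refine ⟨(p - (i + 1)).val, ZMod.val_lt _, by rw [hv]; ring, ?_⟩
    by_contra hlt
    push_neg at hlt
    apply hamin _ hlt
    rw [hv, show i + 1 + (p - (i + 1)) = p by ring]
    exact hp
  have exact_bwd : ∀ p, G.Adj w (c p) → ∃ t : ℕ, t < m ∧ p = i - 1 - (t : ℕ) ∧ b ≤ t := by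
    intro p hp
    have hv : ((((i - 1) - p).val : ℕ) : ZMod m) = (i - 1) - p :=
      ZMod.natCast_rightInverse _
    refine ⟨((i - 1) - p).val, ZMod.val_lt _, by rw [hv]; ring, ?_⟩
    by_contra hlt
    push_neg at hlt
    apply hbmin _ hlt
    rw [hv, show i - 1 - ((i - 1) - p) = p by ring]
    exact hp
  -- a ≠ 0 (triangle), a ≠ m-2 (triangle), 2 ≤ a ≤ m-4 impossible (short hole)
  have ha0 : a ≠ 0 := by
    intro h
    apply tri1
    rw [show (i + 1 : ZMod m) = i + 1 + ((a : ℕ) : ZMod m) by rw [h]; push_cast; ring]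
    exact ha
  have hb0 : b ≠ 0 := by
    intro h
    apply tri2
    rw [show (i - 1 : ZMod m) = i - 1 - ((b : ℕ) : ZMod m) by rw [h]; push_cast; ring]
    exact hb
  have hcastm : ∀ k : ℕ, k ≤ m → ((m - k : ℕ) : ZMod m) = -(k : ℕ) := by
    intro k hk
    push_cast [Nat.cast_sub hk]
    rw [ZMod.natCast_self]
    ring
  have ham2 : a ≠ m - 2 := by
    intro h
    apply tri2
    rw [show (i - 1 : ZMod m) = i + 1 + ((a : ℕ) : ZMod m) by
      rw [h, hcastm 2 (by omega)]; push_cast; ring]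
    exact ha
  have hbm2 : b ≠ m - 2 := by
    intro h
    apply tri1
    rw [show (i + 1 : ZMod m) = i - 1 - ((b : ℕ) : ZMod m) by
      rw [h, hcastm 2 (by omega)]; push_cast; ring]
    exact hb
  have haSC : ¬ (2 ≤ a ∧ a ≤ m - 4) := by
    rintro ⟨h1, h2⟩
    refine SC2 hm hshort hc hcinj u w (i + 1) a h1 h2 ?_ hup hw ha hamin hwC
    intro q hq
    rcases hue q hq with h | h
    · right; rw [h]; ring
    · left; rw [h]
  have hbSC : ¬ (2 ≤ b ∧ b ≤ m - 4) := by
    rintro ⟨h1, h2⟩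
    have hcrev : ∀ x y : ZMod m,
        G.Adj (c (-x)) (c (-y)) ↔ (y = x + 1 ∨ x = y + 1) := by
      intro x y
      rw [hc]
      constructor
      · rintro (h | h)
        · right; linear_combination h
        · left; linear_combination h
      · rintro (h | h)
        · right; linear_combination h
        · left; linear_combination h
    refine SC2 hm hshort (c := fun k => c (-k)) hcrev
      (fun x y h => neg_injective (hcinj h)) u w (1 - i) b h1 h2 ?_ ?_ hw ?_ ?_ ?_
    · intro q hq
      rcases hue (-q) hq with h | h
      · left; linear_combination -h
      · right; linear_combination -h
    · show G.Adj u (c (-(1 - i)))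
      rw [show -(1 - i) = i - 1 by ring]
      exact hum
    · show G.Adj w (c (-(1 - i + (b : ℕ))))
      rw [show -(1 - i + ((b : ℕ) : ZMod m)) = i - 1 - (b : ℕ) by ring]
      exact hb
    · intro t ht
      show ¬ G.Adj w (c (-(1 - i + (t : ℕ))))
      rw [show -(1 - i + ((t : ℕ) : ZMod m)) = i - 1 - (t : ℕ) by ring]
      exact hbmin t ht
    · rintro ⟨k, hk⟩
      exact hwC ⟨-k, hk⟩
  -- the B_i case: neighbourhood on C is exactly {c i}
  have caseBi : (∀ p, G.Adj w (c p) → p = i) → G.Adj w (c i) → False := by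
    intro hwBi hwi
    exact X2_of hX2 (c (i+1)) (c i) (c (i-1)) u' (c (i+2)) w (c (i-2))
      (cc_adj' hc (by ring)) (cc_adj' hc (by ring)) (hu'm.symm) (hu'p.symm)
      (cc_adj hc (by ring)) (hwi.symm) (cc_adj' hc (by ring))
      (cc_ne hm hcinj _ _ 2 (by push_cast; ring) (by norm_num) (by norm_num))
      (cc_nadj hm hc _ _ 2 (by push_cast; ring) (by norm_num) (by norm_num) (by norm_num))
      (fun h => hwne _ h.symm)
      (fun h => zne' hm (i+1) i 1 (by push_cast; ring) (by norm_num) (by norm_num)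
        (hwBi _ h.symm))
      (cc_ne hm hcinj _ _ 3 (by push_cast; ring) (by norm_num) (by norm_num))
      (cc_nadj hm hc _ _ 3 (by push_cast; ring) (by norm_num) (by norm_num) (by norm_num))
      (fun h => hnw (by rw [← h]; exact hwi.symm))
      (fun h => (hu'e i h.symm).elim
        (zne' hm i (i-1) 1 (by push_cast; ring) (by norm_num) (by norm_num))
        (zne' hm i (i+1) (-1) (by push_cast; ring) (by norm_num) (by norm_num)))
      (cc_ne hm hcinj _ _ (-2) (by push_cast; ring) (by norm_num) (by norm_num))
      (cc_nadj hm hc _ _ (-2) (by push_cast; ring) (by norm_num) (by norm_num) (by norm_num))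
      (cc_ne hm hcinj _ _ 2 (by push_cast; ring) (by norm_num) (by norm_num))
      (cc_nadj hm hc _ _ 2 (by push_cast; ring) (by norm_num) (by norm_num) (by norm_num))
      (cc_ne hm hcinj _ _ (-3) (by push_cast; ring) (by norm_num) (by norm_num))
      (cc_nadj hm hc _ _ (-3) (by push_cast; ring) (by norm_num) (by norm_num) (by norm_num))
      (fun h => hwne _ h.symm)
      (fun h => zne' hm (i-1) i (-1) (by push_cast; ring) (by norm_num) (by norm_num)
        (hwBi _ h.symm))
      (Ai_ne_c hm hc hu'e (zne' hm _ _ 2 (by push_cast; ring) (by norm_num) (by norm_num)))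
      (hnadj_u' _ (zne' hm _ _ 3 (by push_cast; ring) (by norm_num) (by norm_num))
        (zne' hm _ _ 1 (by push_cast; ring) (by norm_num) (by norm_num)))
      (fun h => (hu'e i (by rw [h]; exact hwi)).elim
        (zne' hm i (i-1) 1 (by push_cast; ring) (by norm_num) (by norm_num))
        (zne' hm i (i+1) (-1) (by push_cast; ring) (by norm_num) (by norm_num)))
      (hnw)
      (Ai_ne_c hm hc hu'e (zne' hm _ _ (-2) (by push_cast; ring) (by norm_num) (by norm_num)))
      (hnadj_u' _ (zne' hm _ _ (-1) (by push_cast; ring) (by norm_num) (by norm_num))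
        (zne' hm _ _ (-3) (by push_cast; ring) (by norm_num) (by norm_num)))
      (fun h => hwne _ h.symm)
      (fun h => zne' hm (i+2) i 2 (by push_cast; ring) (by norm_num) (by norm_num)
        (hwBi _ h.symm))
      (cc_ne hm hcinj _ _ 4 (by push_cast; ring) (by norm_num) (by norm_num))
      (cc_nadj hm hc _ _ 4 (by push_cast; ring) (by norm_num) (by norm_num) (by norm_num))
      (hwne _)
      (fun h => zne' hm (i-2) i (-2) (by push_cast; ring) (by norm_num) (by norm_num)
        (hwBi _ h))
  -- a = m-1 : exact B_i
  have haM1 : a = m - 1 → False := by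
    intro haa
    have hwi : G.Adj w (c i) := by
      rw [show (i : ZMod m) = i + 1 + ((a : ℕ) : ZMod m) by
        rw [haa, hcastm 1 (by omega)]; push_cast; ring]
      exact ha
    refine caseBi ?_ hwi
    intro p hp
    obtain ⟨t, htm, rfl, hta⟩ := exact_fwd p hp
    have ht1 : t = m - 1 := by omega
    rw [ht1, hcastm 1 (by omega)]
    push_cast; ring
  have hbM1 : b = m - 1 → False := by
    intro hbb
    have hwi : G.Adj w (c i) := by
      rw [show (i : ZMod m) = i - 1 - ((b : ℕ) : ZMod m) by
        rw [hbb, hcastm 1 (by omega)]; push_cast; ring]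
      exact hb
    refine caseBi ?_ hwi
    intro p hp
    obtain ⟨t, htm, rfl, htb⟩ := exact_bwd p hp
    have ht1 : t = m - 1 := by omega
    rw [ht1, hcastm 1 (by omega)]
    push_cast; ring
  -- so a, b ∈ {1, m-3}
  have haval : a = 1 ∨ a = m - 3 := by
    rcases Nat.lt_or_ge a (m - 1) with h | h
    · by_contra hcon
      push_neg at hcon
      exact haSC ⟨by omega, by omega⟩
    · exact (haM1 (by omega)).elim
  have hbval : b = 1 ∨ b = m - 3 := by
    rcases Nat.lt_or_ge b (m - 1) with h | h
    · by_contra hcon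
      push_neg at hcon
      exact hbSC ⟨by omega, by omega⟩
    · exact (hbM1 (by omega)).elim
  rcases haval with ha1 | ha3
  · rcases hbval with hb1 | hb3
    · -- (a,b) = (1,1) : X2 configuration
      have haa : G.Adj w (c (i+2)) := by
        rw [show (i+2 : ZMod m) = i + 1 + ((a : ℕ) : ZMod m) by rw [ha1]; push_cast; ring]
        exact ha
      have hbb : G.Adj w (c (i-2)) := by
        rw [show (i-2 : ZMod m) = i - 1 - ((b : ℕ) : ZMod m) by rw [hb1]; push_cast; ring]
        exact hb
      have hni3 : ¬ G.Adj w (c (i+3)) := fun h => noK3 hK3 haa h (cc_adj hc (by ring))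
      exact X2_of hX2 w (c (i+2)) (c (i+1)) u (c (i-2)) (c (i+3)) u'
        (haa) (cc_adj' hc (by ring)) (hup.symm) (hw.symm)
        (hbb) (cc_adj hc (by ring)) (hu'p.symm)
        (hwne _) (tri1)
        (hwne _) (hni3)
        (fun h => huu' (h ▸ hw)) (fun h => hnw h.symm)
        ((Ai_ne_c hm hc hue (zne' hm _ _ 2 (by push_cast; ring) (by norm_num) (by norm_num))).symm)
        (fun h => hnadj_u _ (zne' hm _ _ 3 (by push_cast; ring) (by norm_num) (by norm_num))
          (zne' hm _ _ 1 (by push_cast; ring) (by norm_num) (by norm_num)) h.symm)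
        (cc_ne hm hcinj _ _ 4 (by push_cast; ring) (by norm_num) (by norm_num))
        (cc_nadj hm hc _ _ 4 (by push_cast; ring) (by norm_num) (by norm_num) (by norm_num))
        ((Ai_ne_c hm hc hu'e (zne' hm _ _ 2 (by push_cast; ring) (by norm_num) (by norm_num))).symm)
        (fun h => hnadj_u' _ (zne' hm _ _ 3 (by push_cast; ring) (by norm_num) (by norm_num))
          (zne' hm _ _ 1 (by push_cast; ring) (by norm_num) (by norm_num)) h.symm)
        (cc_ne hm hcinj _ _ 3 (by push_cast; ring) (by norm_num) (by norm_num))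
        (cc_nadj hm hc _ _ 3 (by push_cast; ring) (by norm_num) (by norm_num) (by norm_num))
        (cc_ne hm hcinj _ _ (-2) (by push_cast; ring) (by norm_num) (by norm_num))
        (cc_nadj hm hc _ _ (-2) (by push_cast; ring) (by norm_num) (by norm_num) (by norm_num))
        (Ai_ne_c hm hc hue (zne' hm _ _ (-2) (by push_cast; ring) (by norm_num) (by norm_num)))
        (hnadj_u _ (zne' hm _ _ (-1) (by push_cast; ring) (by norm_num) (by norm_num))
          (zne' hm _ _ (-3) (by push_cast; ring) (by norm_num) (by norm_num)))
        (Ai_ne_c hm hc hue (zne' hm _ _ 3 (by push_cast; ring) (by norm_num) (by norm_num)))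
        (hnadj_u _ (zne' hm _ _ 4 (by push_cast; ring) (by norm_num) (by norm_num))
          (zne' hm _ _ 2 (by push_cast; ring) (by norm_num) (by norm_num)))
        (hneuu') (huu')
        (cc_ne hm hcinj _ _ (-5) (by push_cast; ring) (by norm_num) (by norm_num))
        (cc_nadj hm hc _ _ (-5) (by push_cast; ring) (by norm_num) (by norm_num) (by norm_num))
        ((Ai_ne_c hm hc hu'e (zne' hm _ _ (-2) (by push_cast; ring) (by norm_num) (by norm_num))).symm)
        (fun h => hnadj_u' _ (zne' hm _ _ (-1) (by push_cast; ring) (by norm_num) (by norm_num))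
          (zne' hm _ _ (-3) (by push_cast; ring) (by norm_num) (by norm_num)) h.symm)
        ((Ai_ne_c hm hc hu'e (zne' hm _ _ 3 (by push_cast; ring) (by norm_num) (by norm_num))).symm)
        (fun h => hnadj_u' _ (zne' hm _ _ 4 (by push_cast; ring) (by norm_num) (by norm_num))
          (zne' hm _ _ 2 (by push_cast; ring) (by norm_num) (by norm_num)) h.symm)
    · -- (a,b) = (1, m-3) : w ∈ A_{i+1} ∪ B_{i+2}
      have haa : G.Adj w (c (i+2)) := by
        rw [show (i+2 : ZMod m) = i + 1 + ((a : ℕ) : ZMod m) by rw [ha1]; push_cast; ring]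
        exact ha
      have hexact : ∀ p, G.Adj w (c p) → p = i ∨ p = i + 2 := by
        intro p hp
        obtain ⟨t, htm, rfl, htb⟩ := exact_bwd p hp
        have ht3 : t = m - 3 ∨ t = m - 2 ∨ t = m - 1 := by omega
        rcases ht3 with rfl | rfl | rfl
        · right; rw [hcastm 3 (by omega)]; ring
        · exfalso
          apply tri1
          rw [show (i+1 : ZMod m) = i - 1 - ((m - 2 : ℕ) : ZMod m) by
            rw [hcastm 2 (by omega)]; ring]
          exact hp
        · left; rw [hcastm 1 (by omega)]; ring
      by_cases hwi : G.Adj w (c i)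
      · have hmem : w ∈ Ai G m c (i+1) := by
          apply mem_Ai_of
          · rw [show (i+1-1 : ZMod m) = i by ring]; exact hwi
          · rw [show (i+1+1 : ZMod m) = i+2 by ring]; exact haa
          · intro p hp
            rcases hexact p hp with rfl | rfl
            · left; ring
            · right; ring
        exact hnw ((hR w (Or.inl hmem) hw.symm).symm)
      · have hmem : w ∈ Bi G m c (i+2) := by
          apply mem_Bi_of haa
          intro p hp
          rcases hexact p hp with rfl | rfl
          · exact (hwi hp).elim
          · rfl
        exact hnw ((hR w (Or.inr hmem) hw.symm).symm)
  · rcases hbval with hb1 | hb3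
    · -- (a,b) = (m-3, 1) : w ∈ B_{i-2} ∪ A_{i-1}
      have hbb : G.Adj w (c (i-2)) := by
        rw [show (i-2 : ZMod m) = i - 1 - ((b : ℕ) : ZMod m) by rw [hb1]; push_cast; ring]
        exact hb
      have hexact : ∀ p, G.Adj w (c p) → p = i ∨ p = i - 2 := by
        intro p hp
        obtain ⟨t, htm, rfl, hta⟩ := exact_fwd p hp
        have ht3 : t = m - 3 ∨ t = m - 2 ∨ t = m - 1 := by omega
        rcases ht3 with rfl | rfl | rfl
        · right; rw [hcastm 3 (by omega)]; ring
        · exfalso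
          apply tri2
          rw [show (i-1 : ZMod m) = i + 1 + ((m - 2 : ℕ) : ZMod m) by
            rw [hcastm 2 (by omega)]; ring]
          exact hp
        · left; rw [hcastm 1 (by omega)]; ring
      by_cases hwi : G.Adj w (c i)
      · have hmem : w ∈ Ai G m c (i-1) := by
          apply mem_Ai_of
          · rw [show (i-1-1 : ZMod m) = i-2 by ring]; exact hbb
          · rw [show (i-1+1 : ZMod m) = i by ring]; exact hwi
          · intro p hp
            rcases hexact p hp with rfl | rfl
            · right; ring
            · left; ring
        exact hnw ((hL w (Or.inr hmem) hw.symm).symm)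
      · have hmem : w ∈ Bi G m c (i-2) := by
          apply mem_Bi_of hbb
          intro p hp
          rcases hexact p hp with rfl | rfl
          · exact (hwi hp).elim
          · rfl
        exact hnw ((hL w (Or.inl hmem) hw.symm).symm)
    · -- (a,b) = (m-3, m-3) : impossible
      have haa : G.Adj w (c (i - 2)) := by
        rw [show (i - 2 : ZMod m) = i + 1 + ((a : ℕ) : ZMod m) by
          rw [ha3, hcastm 3 (by omega)]; push_cast; ring]
        exact ha
      obtain ⟨t, htm, hte, htb⟩ := exact_bwd _ haa
      have : ((t : ℕ) : ZMod m) = ((1 : ℕ) : ZMod m) := by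
        push_cast
        linear_combination hte
      have := (cast_inj_nat hm htm (by omega)).mp this
      omega
end Aux8
section Aux9
variable {V : Type*} {G : SimpleGraph V} {m : ℕ} {c : ZMod m → V}

lemma Lfacts (hm : 10 ≤ m)
    (hc : ∀ i j : ZMod m, G.Adj (c i) (c j) ↔ (j = i + 1 ∨ i = j + 1))
    (hcinj : Function.Injective c) {i : ZMod m} {z : V}
    (hz : z ∈ Bi G m c (i - 2) ∪ Ai G m c (i - 1)) :
    G.Adj z (c (i - 2)) ∧ (∀ p, G.Adj z (c p) → p = i - 2 ∨ p = i) ∧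
      (∀ q, q ≠ i - 1 → z ≠ c q) := by
  rcases hz with hz | hz
  · obtain ⟨h1, h2⟩ := Bi_facts hcinj hz
    exact ⟨h1, fun p hp => Or.inl (h2 p hp), fun q _ => Bi_ne_c hm hc h2 q⟩
  · obtain ⟨h1, h2, h3⟩ := Ai_facts hcinj hz
    refine ⟨by rw [show (i - 2 : ZMod m) = (i - 1) - 1 by ring]; exact h1, ?_, ?_⟩
    · intro p hp
      rcases h3 p hp with h | h
      · left; rw [h]; ring
      · right; rw [h]; ring
    · exact fun q hq => Ai_ne_c hm hc h3 hq

lemma Rfacts (hm : 10 ≤ m)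
    (hc : ∀ i j : ZMod m, G.Adj (c i) (c j) ↔ (j = i + 1 ∨ i = j + 1))
    (hcinj : Function.Injective c) {i : ZMod m} {z : V}
    (hz : z ∈ Ai G m c (i + 1) ∪ Bi G m c (i + 2)) :
    G.Adj z (c (i + 2)) ∧ (∀ p, G.Adj z (c p) → p = i + 2 ∨ p = i) ∧
      (∀ q, q ≠ i + 1 → z ≠ c q) := by
  rcases hz with hz | hz
  · obtain ⟨h1, h2, h3⟩ := Ai_facts hcinj hz
    refine ⟨by rw [show (i + 2 : ZMod m) = (i + 1) + 1 by ring]; exact h2, ?_, ?_⟩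
    · intro p hp
      rcases h3 p hp with h | h
      · right; rw [h]; ring
      · left; rw [h]; ring
    · exact fun q hq => Ai_ne_c hm hc h3 hq
  · obtain ⟨h1, h2⟩ := Bi_facts hcinj hz
    exact ⟨h1, fun p hp => Or.inl (h2 p hp), fun q _ => Bi_ne_c hm hc h2 q⟩

lemma F1 (hm : 10 ≤ m)
    (hc : ∀ i j : ZMod m, G.Adj (c i) (c j) ↔ (j = i + 1 ∨ i = j + 1))
    (hcinj : Function.Injective c)
    (hK3 : ¬ ContainsInduced graphK3 G) (hT2 : ¬ ContainsInduced graphT2 G)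
    (i : ZMod m) (u u' w x : V)
    (hu : u ∈ Ai G m c i) (hu' : u' ∈ Ai G m c i)
    (hwL : w ∈ Bi G m c (i - 2) ∪ Ai G m c (i - 1))
    (hxL : x ∈ Bi G m c (i - 2) ∪ Ai G m c (i - 1))
    (hwu : G.Adj w u) (hwu' : ¬ G.Adj w u')
    (hxu' : G.Adj x u') (hxu : ¬ G.Adj x u) : False := by
  obtain ⟨hum, hup, hue⟩ := Ai_facts hcinj hu
  obtain ⟨hu'm, hu'p, hu'e⟩ := Ai_facts hcinj hu'
  have huu' : ¬ G.Adj u u' := fun h => noK3 hK3 h hum hu'm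
  have hnadj_u : ∀ q : ZMod m, q ≠ i - 1 → q ≠ i + 1 → ¬ G.Adj u (c q) :=
    fun q h1 h2 h => (hue q h).elim h1 h2
  have hnadj_u' : ∀ q : ZMod m, q ≠ i - 1 → q ≠ i + 1 → ¬ G.Adj u' (c q) :=
    fun q h1 h2 h => (hu'e q h).elim h1 h2
  obtain ⟨hW1, hW2, hW3⟩ := Lfacts hm hc hcinj hwL
  obtain ⟨hX1, hX2', hX3'⟩ := Lfacts hm hc hcinj hxL
  exact T2_of hT2 (c (i-2)) w x (c (i-3)) u u' (c (i-4))
    (hW1.symm) (hX1.symm) (cc_adj' hc (by ring)) (hwu) (hxu') (cc_adj' hc (by ring))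
    -- 04 : c(i-2) vs u
    ((Ai_ne_c hm hc hue (zne' hm _ _ (-2) (by push_cast; ring) (by norm_num) (by norm_num))).symm)
    (fun h => hnadj_u _ (zne' hm _ _ (-1) (by push_cast; ring) (by norm_num) (by norm_num))
      (zne' hm _ _ (-3) (by push_cast; ring) (by norm_num) (by norm_num)) h.symm)
    -- 05 : c(i-2) vs u'
    ((Ai_ne_c hm hc hu'e (zne' hm _ _ (-2) (by push_cast; ring) (by norm_num) (by norm_num))).symm)
    (fun h => hnadj_u' _ (zne' hm _ _ (-1) (by push_cast; ring) (by norm_num) (by norm_num))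
      (zne' hm _ _ (-3) (by push_cast; ring) (by norm_num) (by norm_num)) h.symm)
    -- 06 : c(i-2) vs c(i-4)
    (cc_ne hm hcinj _ _ 2 (by push_cast; ring) (by norm_num) (by norm_num))
    (cc_nadj hm hc _ _ 2 (by push_cast; ring) (by norm_num) (by norm_num) (by norm_num))
    -- 12 : w vs x
    (fun h => hxu (h ▸ hwu))
    (fun h => noK3 hK3 h hW1 hX1)
    -- 13 : w vs c(i-3)
    (hW3 _ (zne' hm _ _ (-2) (by push_cast; ring) (by norm_num) (by norm_num)))
    (fun h => (hW2 _ h).elim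
      (zne' hm _ _ (-1) (by push_cast; ring) (by norm_num) (by norm_num))
      (zne' hm _ _ (-3) (by push_cast; ring) (by norm_num) (by norm_num)))
    -- 15 : w vs u'
    (fun h => huu' ((h ▸ hwu) : G.Adj u' u).symm)
    (hwu')
    -- 16 : w vs c(i-4)
    (hW3 _ (zne' hm _ _ (-3) (by push_cast; ring) (by norm_num) (by norm_num)))
    (fun h => (hW2 _ h).elim
      (zne' hm _ _ (-2) (by push_cast; ring) (by norm_num) (by norm_num))
      (zne' hm _ _ (-4) (by push_cast; ring) (by norm_num) (by norm_num)))
    -- 23 : x vs c(i-3)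
    (hX3' _ (zne' hm _ _ (-2) (by push_cast; ring) (by norm_num) (by norm_num)))
    (fun h => (hX2' _ h).elim
      (zne' hm _ _ (-1) (by push_cast; ring) (by norm_num) (by norm_num))
      (zne' hm _ _ (-3) (by push_cast; ring) (by norm_num) (by norm_num)))
    -- 24 : x vs u
    (fun h => huu' ((h ▸ hxu') : G.Adj u u'))
    (hxu)
    -- 26 : x vs c(i-4)
    (hX3' _ (zne' hm _ _ (-3) (by push_cast; ring) (by norm_num) (by norm_num)))
    (fun h => (hX2' _ h).elim
      (zne' hm _ _ (-2) (by push_cast; ring) (by norm_num) (by norm_num))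
      (zne' hm _ _ (-4) (by push_cast; ring) (by norm_num) (by norm_num)))
    -- 34 : c(i-3) vs u
    ((Ai_ne_c hm hc hue (zne' hm _ _ (-3) (by push_cast; ring) (by norm_num) (by norm_num))).symm)
    (fun h => hnadj_u _ (zne' hm _ _ (-2) (by push_cast; ring) (by norm_num) (by norm_num))
      (zne' hm _ _ (-4) (by push_cast; ring) (by norm_num) (by norm_num)) h.symm)
    -- 35 : c(i-3) vs u'
    ((Ai_ne_c hm hc hu'e (zne' hm _ _ (-3) (by push_cast; ring) (by norm_num) (by norm_num))).symm)
    (fun h => hnadj_u' _ (zne' hm _ _ (-2) (by push_cast; ring) (by norm_num) (by norm_num))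
      (zne' hm _ _ (-4) (by push_cast; ring) (by norm_num) (by norm_num)) h.symm)
    -- 45 : u vs u'
    (fun h => hwu' (h ▸ hwu))
    (huu')
    -- 46 : u vs c(i-4)
    (Ai_ne_c hm hc hue (zne' hm _ _ (-4) (by push_cast; ring) (by norm_num) (by norm_num)))
    (hnadj_u _ (zne' hm _ _ (-3) (by push_cast; ring) (by norm_num) (by norm_num))
      (zne' hm _ _ (-5) (by push_cast; ring) (by norm_num) (by norm_num)))
    -- 56 : u' vs c(i-4)
    (Ai_ne_c hm hc hu'e (zne' hm _ _ (-4) (by push_cast; ring) (by norm_num) (by norm_num)))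
    (hnadj_u' _ (zne' hm _ _ (-3) (by push_cast; ring) (by norm_num) (by norm_num))
      (zne' hm _ _ (-5) (by push_cast; ring) (by norm_num) (by norm_num)))

end Aux9
section Aux10
variable {V : Type*} {G : SimpleGraph V} {m : ℕ} {c : ZMod m → V}

lemma F2 (hm : 10 ≤ m)
    (hc : ∀ i j : ZMod m, G.Adj (c i) (c j) ↔ (j = i + 1 ∨ i = j + 1))
    (hcinj : Function.Injective c)
    (hK3 : ¬ ContainsInduced graphK3 G) (hT2 : ¬ ContainsInduced graphT2 G)
    (i : ZMod m) (u u' w x : V)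
    (hu : u ∈ Ai G m c i) (hu' : u' ∈ Ai G m c i)
    (hwL : w ∈ Ai G m c (i + 1) ∪ Bi G m c (i + 2))
    (hxL : x ∈ Ai G m c (i + 1) ∪ Bi G m c (i + 2))
    (hwu : G.Adj w u) (hwu' : ¬ G.Adj w u')
    (hxu' : G.Adj x u') (hxu : ¬ G.Adj x u) : False := by
  obtain ⟨hum, hup, hue⟩ := Ai_facts hcinj hu
  obtain ⟨hu'm, hu'p, hu'e⟩ := Ai_facts hcinj hu'
  have huu' : ¬ G.Adj u u' := fun h => noK3 hK3 h hum hu'm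
  have hnadj_u : ∀ q : ZMod m, q ≠ i - 1 → q ≠ i + 1 → ¬ G.Adj u (c q) :=
    fun q h1 h2 h => (hue q h).elim h1 h2
  have hnadj_u' : ∀ q : ZMod m, q ≠ i - 1 → q ≠ i + 1 → ¬ G.Adj u' (c q) :=
    fun q h1 h2 h => (hu'e q h).elim h1 h2
  obtain ⟨hW1, hW2, hW3⟩ := Rfacts hm hc hcinj hwL
  obtain ⟨hX1, hX2', hX3'⟩ := Rfacts hm hc hcinj hxL
  exact T2_of hT2 (c (i+2)) w x (c (i+3)) u u' (c (i+4))
    (hW1.symm) (hX1.symm) (cc_adj hc (by ring)) (hwu) (hxu') (cc_adj hc (by ring))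
    ((Ai_ne_c hm hc hue (zne' hm _ _ 2 (by push_cast; ring) (by norm_num) (by norm_num))).symm)
    (fun h => hnadj_u _ (zne' hm _ _ 3 (by push_cast; ring) (by norm_num) (by norm_num))
      (zne' hm _ _ 1 (by push_cast; ring) (by norm_num) (by norm_num)) h.symm)
    ((Ai_ne_c hm hc hu'e (zne' hm _ _ 2 (by push_cast; ring) (by norm_num) (by norm_num))).symm)
    (fun h => hnadj_u' _ (zne' hm _ _ 3 (by push_cast; ring) (by norm_num) (by norm_num))
      (zne' hm _ _ 1 (by push_cast; ring) (by norm_num) (by norm_num)) h.symm)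
    (cc_ne hm hcinj _ _ (-2) (by push_cast; ring) (by norm_num) (by norm_num))
    (cc_nadj hm hc _ _ (-2) (by push_cast; ring) (by norm_num) (by norm_num) (by norm_num))
    (fun h => hxu (h ▸ hwu))
    (fun h => noK3 hK3 h hW1 hX1)
    (hW3 _ (zne' hm _ _ 2 (by push_cast; ring) (by norm_num) (by norm_num)))
    (fun h => (hW2 _ h).elim
      (zne' hm _ _ 1 (by push_cast; ring) (by norm_num) (by norm_num))
      (zne' hm _ _ 3 (by push_cast; ring) (by norm_num) (by norm_num)))
    (fun h => huu' ((h ▸ hwu) : G.Adj u' u).symm)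
    (hwu')
    (hW3 _ (zne' hm _ _ 3 (by push_cast; ring) (by norm_num) (by norm_num)))
    (fun h => (hW2 _ h).elim
      (zne' hm _ _ 2 (by push_cast; ring) (by norm_num) (by norm_num))
      (zne' hm _ _ 4 (by push_cast; ring) (by norm_num) (by norm_num)))
    (hX3' _ (zne' hm _ _ 2 (by push_cast; ring) (by norm_num) (by norm_num)))
    (fun h => (hX2' _ h).elim
      (zne' hm _ _ 1 (by push_cast; ring) (by norm_num) (by norm_num))
      (zne' hm _ _ 3 (by push_cast; ring) (by norm_num) (by norm_num)))
    (fun h => huu' ((h ▸ hxu') : G.Adj u u'))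
    (hxu)
    (hX3' _ (zne' hm _ _ 3 (by push_cast; ring) (by norm_num) (by norm_num)))
    (fun h => (hX2' _ h).elim
      (zne' hm _ _ 2 (by push_cast; ring) (by norm_num) (by norm_num))
      (zne' hm _ _ 4 (by push_cast; ring) (by norm_num) (by norm_num)))
    ((Ai_ne_c hm hc hue (zne' hm _ _ 3 (by push_cast; ring) (by norm_num) (by norm_num))).symm)
    (fun h => hnadj_u _ (zne' hm _ _ 4 (by push_cast; ring) (by norm_num) (by norm_num))
      (zne' hm _ _ 2 (by push_cast; ring) (by norm_num) (by norm_num)) h.symm)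
    ((Ai_ne_c hm hc hu'e (zne' hm _ _ 3 (by push_cast; ring) (by norm_num) (by norm_num))).symm)
    (fun h => hnadj_u' _ (zne' hm _ _ 4 (by push_cast; ring) (by norm_num) (by norm_num))
      (zne' hm _ _ 2 (by push_cast; ring) (by norm_num) (by norm_num)) h.symm)
    (fun h => hwu' (h ▸ hwu))
    (huu')
    (Ai_ne_c hm hc hue (zne' hm _ _ 4 (by push_cast; ring) (by norm_num) (by norm_num)))
    (hnadj_u _ (zne' hm _ _ 5 (by push_cast; ring) (by norm_num) (by norm_num))
      (zne' hm _ _ 3 (by push_cast; ring) (by norm_num) (by norm_num)))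
    (Ai_ne_c hm hc hu'e (zne' hm _ _ 4 (by push_cast; ring) (by norm_num) (by norm_num)))
    (hnadj_u' _ (zne' hm _ _ 5 (by push_cast; ring) (by norm_num) (by norm_num))
      (zne' hm _ _ 3 (by push_cast; ring) (by norm_num) (by norm_num)))

lemma F3 (hm : 10 ≤ m)
    (hc : ∀ i j : ZMod m, G.Adj (c i) (c j) ↔ (j = i + 1 ∨ i = j + 1))
    (hcinj : Function.Injective c)
    (hK3 : ¬ ContainsInduced graphK3 G) (hX3 : ¬ ContainsInduced graphX3 G)
    (i : ZMod m) (u u' w x : V)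
    (hu : u ∈ Ai G m c i) (hu' : u' ∈ Ai G m c i)
    (hwL : w ∈ Bi G m c (i - 2) ∪ Ai G m c (i - 1))
    (hxR : x ∈ Ai G m c (i + 1) ∪ Bi G m c (i + 2))
    (hwu : G.Adj w u) (hwu' : ¬ G.Adj w u')
    (hxu : G.Adj x u) (hxu' : ¬ G.Adj x u') : False := by
  obtain ⟨hum, hup, hue⟩ := Ai_facts hcinj hu
  obtain ⟨hu'm, hu'p, hu'e⟩ := Ai_facts hcinj hu'
  have huu' : ¬ G.Adj u u' := fun h => noK3 hK3 h hum hu'm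
  have hnadj_u : ∀ q : ZMod m, q ≠ i - 1 → q ≠ i + 1 → ¬ G.Adj u (c q) :=
    fun q h1 h2 h => (hue q h).elim h1 h2
  have hnadj_u' : ∀ q : ZMod m, q ≠ i - 1 → q ≠ i + 1 → ¬ G.Adj u' (c q) :=
    fun q h1 h2 h => (hu'e q h).elim h1 h2
  obtain ⟨hW1, hW2, hW3⟩ := Lfacts hm hc hcinj hwL
  obtain ⟨hX1, hX2', hX3'⟩ := Rfacts hm hc hcinj hxR
  exact X3_of hX3 w (c (i-2)) (c (i-1)) u' (c (i+1)) u x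
    (hW1) (cc_adj hc (by ring)) (hu'm.symm) (hu'p) (hwu) (hum.symm) (hup.symm) (hxu.symm)
    -- 02 : w vs c(i-1)
    (fun h => hwu' (by rw [h]; exact hu'm.symm))
    (fun h => (hW2 _ h).elim
      (zne' hm _ _ 1 (by push_cast; ring) (by norm_num) (by norm_num))
      (zne' hm _ _ (-1) (by push_cast; ring) (by norm_num) (by norm_num)))
    -- 03 : w vs u'
    (fun h => huu' ((h ▸ hwu) : G.Adj u' u).symm)
    (hwu')
    -- 04 : w vs c(i+1)
    (hW3 _ (zne' hm _ _ 2 (by push_cast; ring) (by norm_num) (by norm_num)))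
    (fun h => (hW2 _ h).elim
      (zne' hm _ _ 3 (by push_cast; ring) (by norm_num) (by norm_num))
      (zne' hm _ _ 1 (by push_cast; ring) (by norm_num) (by norm_num)))
    -- 06 : w vs x
    (fun h => ((hX2' _ (h ▸ hW1)).elim
      (zne' hm _ _ (-4) (by push_cast; ring) (by norm_num) (by norm_num))
      (zne' hm _ _ (-2) (by push_cast; ring) (by norm_num) (by norm_num))))
    (fun h => noK3 hK3 h hwu hxu)
    -- 13 : c(i-2) vs u'
    ((Ai_ne_c hm hc hu'e (zne' hm _ _ (-2) (by push_cast; ring) (by norm_num) (by norm_num))).symm)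
    (fun h => hnadj_u' _ (zne' hm _ _ (-1) (by push_cast; ring) (by norm_num) (by norm_num))
      (zne' hm _ _ (-3) (by push_cast; ring) (by norm_num) (by norm_num)) h.symm)
    -- 14 : c(i-2) vs c(i+1)
    (cc_ne hm hcinj _ _ (-3) (by push_cast; ring) (by norm_num) (by norm_num))
    (cc_nadj hm hc _ _ (-3) (by push_cast; ring) (by norm_num) (by norm_num) (by norm_num))
    -- 15 : c(i-2) vs u
    ((Ai_ne_c hm hc hue (zne' hm _ _ (-2) (by push_cast; ring) (by norm_num) (by norm_num))).symm)
    (fun h => hnadj_u _ (zne' hm _ _ (-1) (by push_cast; ring) (by norm_num) (by norm_num))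
      (zne' hm _ _ (-3) (by push_cast; ring) (by norm_num) (by norm_num)) h.symm)
    -- 16 : c(i-2) vs x
    ((hX3' _ (zne' hm _ _ (-3) (by push_cast; ring) (by norm_num) (by norm_num))).symm)
    (fun h => (hX2' _ h.symm).elim
      (zne' hm _ _ (-4) (by push_cast; ring) (by norm_num) (by norm_num))
      (zne' hm _ _ (-2) (by push_cast; ring) (by norm_num) (by norm_num)))
    -- 24 : c(i-1) vs c(i+1)
    (cc_ne hm hcinj _ _ (-2) (by push_cast; ring) (by norm_num) (by norm_num))
    (cc_nadj hm hc _ _ (-2) (by push_cast; ring) (by norm_num) (by norm_num) (by norm_num))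
    -- 26 : c(i-1) vs x
    ((hX3' _ (zne' hm _ _ (-2) (by push_cast; ring) (by norm_num) (by norm_num))).symm)
    (fun h => (hX2' _ h.symm).elim
      (zne' hm _ _ (-3) (by push_cast; ring) (by norm_num) (by norm_num))
      (zne' hm _ _ (-1) (by push_cast; ring) (by norm_num) (by norm_num)))
    -- 35 : u' vs u
    (fun h => hwu' (by rw [← h] at hwu; exact hwu))
    (fun h => huu' h.symm)
    -- 36 : u' vs x
    (fun h => huu' ((h.symm ▸ hxu) : G.Adj u' u).symm)
    (fun h => hxu' h.symm)
    -- 46 : c(i+1) vs x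
    (fun h => hxu' (by rw [← h]; exact hu'p.symm))
    (fun h => (hX2' _ h.symm).elim
      (zne' hm _ _ (-1) (by push_cast; ring) (by norm_num) (by norm_num))
      (zne' hm _ _ 1 (by push_cast; ring) (by norm_num) (by norm_num)))

end Aux10
theorem ltA_strict_partial_order {V : Type*} (G : SimpleGraph V) (hconn : G.Connected) (hG : AlmostBPG G)
    (m : ℕ) (c : ZMod m → V) (hm : 10 ≤ m) (hC : ShortestHole G m c) :
    ∀ i : ZMod m,
      (∀ u ∈ Ai G m c i, ¬ ltA G m c i u u) ∧
        (∀ u ∈ Ai G m c i, ∀ u' ∈ Ai G m c i, ∀ u'' ∈ Ai G m c i,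
          ltA G m c i u u' → ltA G m c i u' u'' → ltA G m c i u u'') ∧
        ∀ u ∈ Ai G m c i, ∀ u' ∈ Ai G m c i,
          ((¬ ltA G m c i u u' ∧ ¬ ltA G m c i u' u) ↔
            G.neighborSet u = G.neighborSet u') := by
  intro i
  obtain ⟨⟨h5, hcinj, hc⟩, hshort⟩ := hC
  obtain ⟨hK3, hT2, hX2, hX3, hCk⟩ := hG
  refine ⟨?_, ?_, ?_⟩
  · -- irreflexivity
    rintro u hu (⟨z, hz, h1, h2⟩ | ⟨z, hz, h1, h2⟩) <;> exact h2 h1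
  · -- transitivity
    rintro u hu u' hu' u'' hu'' h1 h2
    rcases h1 with ⟨w, hwL, hw1, hw2⟩ | ⟨x, hxR, hx1, hx2⟩
    · rcases h2 with ⟨w', hw'L, hw'1, hw'2⟩ | ⟨x', hx'R, hx'1, hx'2⟩
      · -- (P, P)
        left
        refine ⟨w, hwL, hw1, ?_⟩
        intro h
        exact F1 hm hc hcinj hK3 hT2 i u' u'' w' w hu' hu'' hw'L hwL hw'1 hw'2 h hw2
      · -- (P, R)
        by_cases hx'u : G.Adj x' u
        · exact (F3 hm hc hcinj hK3 hX3 i u u' w x' hu hu' hwL hx'R hw1 hw2 hx'u hx'2).elim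
        · exact Or.inr ⟨x', hx'R, hx'1, hx'u⟩
    · rcases h2 with ⟨w', hw'L, hw'1, hw'2⟩ | ⟨x', hx'R, hx'1, hx'2⟩
      · -- (R, P)
        by_cases hw'u : G.Adj w' u
        · exact Or.inl ⟨w', hw'L, hw'u, hw'2⟩
        · exact (F3 hm hc hcinj hK3 hX3 i u' u w' x hu' hu hw'L hxR hw'1 hw'u hx1 hx2).elim
      · -- (R, R)
        by_cases hx'u : G.Adj x' u
        · exact (F2 hm hc hcinj hK3 hT2 i u u' x' x hu hu' hx'R hxR hx'u hx'2 hx1 hx2).elim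
        · exact Or.inr ⟨x', hx'R, hx'1, hx'u⟩
  · -- incomparability iff equal neighbourhoods
    intro u hu u' hu'
    constructor
    · rintro ⟨h1, h2⟩
      have hL1 : ∀ z, z ∈ Bi G m c (i - 2) ∪ Ai G m c (i - 1) → G.Adj z u → G.Adj z u' := by
        intro z hz hzu
        by_contra hcon
        exact h1 (Or.inl ⟨z, hz, hzu, hcon⟩)
      have hR1 : ∀ z, z ∈ Ai G m c (i + 1) ∪ Bi G m c (i + 2) → G.Adj z u → G.Adj z u' := by
        intro z hz hzu
        by_contra hcon
        exact h2 (Or.inr ⟨z, hz, hzu, hcon⟩)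
      have hL2 : ∀ z, z ∈ Bi G m c (i - 2) ∪ Ai G m c (i - 1) → G.Adj z u' → G.Adj z u := by
        intro z hz hzu
        by_contra hcon
        exact h2 (Or.inl ⟨z, hz, hzu, hcon⟩)
      have hR2 : ∀ z, z ∈ Ai G m c (i + 1) ∪ Bi G m c (i + 2) → G.Adj z u' → G.Adj z u := by
        intro z hz hzu
        by_contra hcon
        exact h1 (Or.inr ⟨z, hz, hzu, hcon⟩)
      ext v
      simp only [SimpleGraph.mem_neighborSet]
      constructor
      · exact fun h => NBR hm hshort hc hcinj hK3 hX2 i u u' v hu hu' hL1 hR1 h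
      · exact fun h => NBR hm hshort hc hcinj hK3 hX2 i u' u v hu' hu hL2 hR2 h
    · intro hN
      have hiff : ∀ z : V, G.Adj u z ↔ G.Adj u' z := fun z => by
        rw [← SimpleGraph.mem_neighborSet, ← SimpleGraph.mem_neighborSet, hN]
      constructor
      · rintro (⟨z, hz, hz1, hz2⟩ | ⟨z, hz, hz1, hz2⟩)
        · exact hz2 ((hiff z).mp hz1.symm).symm
        · exact hz2 ((hiff z).mpr hz1.symm).symm
      · rintro (⟨z, hz, hz1, hz2⟩ | ⟨z, hz, hz1, hz2⟩)
        · exact hz2 ((hiff z).mpr hz1.symm).symm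
        · exact hz2 ((hiff z).mp hz1.symm).symm
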